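/- arXiv:2604.09133 — 2 statements merged into one kernel-verified Lean document; each statement's English description precedes it below -/
import Mathlib

section
/- Let Ω be a compact Hausdorff space, X a Banach space, and suppose Φ ∈ S(C(Ω, X)*) lies in the norm-closed convex hull of the set {δ_ω ⊗ x* : ω ∈ Ω, x* ∈ X*_1}. Then, viewing Φ as an X*-valued regular Borel measure, the support of Φ is at most countable. -/
open NormedSpace Filter Topology

/-- The functional `δ_ω ⊗ x* : f ↦ x*(f ω)` on `C(Ω, X)`. -/
noncomputable def deltaTensor {Ω : Type*} [TopologicalSpace Ω] [CompactSpace Ω]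
    {X : Type*} [NormedAddCommGroup X] [NormedSpace ℝ X]
    (ω : Ω) (x : StrongDual ℝ X) : StrongDual ℝ C(Ω, X) :=
  LinearMap.mkContinuous
    { toFun := fun f : C(Ω, X) => x (f ω)
      map_add' := fun f g => by simp
      map_smul' := fun c f => by simp }
    ‖x‖ (fun f => by
      calc ‖x (f ω)‖ ≤ ‖x‖ * ‖f ω‖ := x.le_opNorm _
        _ ≤ ‖x‖ * ‖f‖ :=
          mul_le_mul_of_nonneg_left (f.norm_coe_le_norm ω) (norm_nonneg x))


/-! The map `ℓ¹(Ω, X*) → C(Ω, X)*`, `y ↦ ∑ δ_ω ⊗ y_ω`, is an isometric embedding: for finitely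
many distinct points, `∑ ‖y_ω‖ ≤ ‖∑ δ_ω ⊗ y_ω‖` is witnessed by a Tietze extension to `Ω` of
almost norming unit vectors prescribed at those points. Its range is therefore a closed subspace;
it contains every `δ_ω ⊗ x*`, hence the closed convex hull of these, and every element of `ℓ¹`
has countable support. -/

theorem exists_continuousMap_norm_le_one_eqOn {Ω : Type*} [TopologicalSpace Ω] [NormalSpace Ω]
    [T1Space Ω] {X : Type*} [NormedAddCommGroup X] [NormedSpace ℝ X] (s : Finset Ω) (v : Ω → X)
    (hv : ∀ ω ∈ s, ‖v ω‖ ≤ 1) :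
    ∃ f : C(Ω, X), (∀ ω, ‖f ω‖ ≤ 1) ∧ ∀ ω ∈ s, f ω = v ω := by
  classical
  let V : Submodule ℝ X := Submodule.span ℝ (s.image v : Set X)
  let w : C((s : Set Ω), V) :=
    ⟨fun ω => ⟨v ω, Submodule.subset_span (Finset.mem_image_of_mem v ω.2)⟩,
      continuous_of_discreteTopology⟩
  obtain ⟨g, hg, hgw⟩ := w.exists_forall_mem_restrict_eq s.isClosed
    (t := Metric.closedBall (0 : V) 1) (fun ω => by simpa [w] using hv ω ω.2)
  refine ⟨(V.subtypeL : C(V, X)).comp g, fun ω => by simpa using hg ω, fun ω hω => ?_⟩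
  exact congr(($hgw ⟨ω, hω⟩ : X))

theorem StrongDual.exists_norm_le_one_lt_apply {X : Type*} [NormedAddCommGroup X]
    [NormedSpace ℝ X] (y : StrongDual ℝ X) {r : ℝ} (hr : r < ‖y‖) :
    ∃ v : X, ‖v‖ ≤ 1 ∧ r < y v := by
  obtain ⟨v, hv, hrv⟩ := y.exists_lt_apply_of_lt_opNorm hr
  rcases lt_abs.1 hrv with h | h
  · exact ⟨v, hv.le, h⟩
  · exact ⟨-v, by simpa using hv.le, by simpa using h⟩

theorem lp.hasSum_norm_one {α : Type*} {E : α → Type*} [∀ i, NormedAddCommGroup (E i)]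
    (y : lp E 1) : HasSum (fun i => ‖y i‖) ‖y‖ := by
  simpa using lp.hasSum_norm (p := 1) (by simp) y

section DeltaTensor

variable {Ω : Type*} [TopologicalSpace Ω] [CompactSpace Ω]
  {X : Type*} [NormedAddCommGroup X] [NormedSpace ℝ X]

@[simp]
theorem deltaTensor_apply (ω : Ω) (x : StrongDual ℝ X) (f : C(Ω, X)) :
    deltaTensor ω x f = x (f ω) := rfl

theorem norm_deltaTensor_le (ω : Ω) (x : StrongDual ℝ X) : ‖deltaTensor ω x‖ ≤ ‖x‖ :=
  LinearMap.mkContinuous_norm_le _ (norm_nonneg x) _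

theorem deltaTensor_add (ω : Ω) (x x' : StrongDual ℝ X) :
    deltaTensor ω (x + x') = deltaTensor ω x + deltaTensor ω x' := rfl

theorem deltaTensor_smul (ω : Ω) (c : ℝ) (x : StrongDual ℝ X) :
    deltaTensor ω (c • x) = c • deltaTensor ω x := rfl

theorem sum_norm_le_norm_sum_deltaTensor [T2Space Ω] (s : Finset Ω) (y : Ω → StrongDual ℝ X) :
    ∑ ω ∈ s, ‖y ω‖ ≤ ‖∑ ω ∈ s, deltaTensor ω (y ω)‖ := by
  refine le_of_forall_pos_le_add fun ε hε => ?_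
  have hδ : 0 < ε / (s.card + 1) := by positivity
  choose v hv hyv using fun ω => (y ω).exists_norm_le_one_lt_apply (sub_lt_self ‖y ω‖ hδ)
  obtain ⟨f, hf, hfv⟩ := exists_continuousMap_norm_le_one_eqOn s v fun ω _ => hv ω
  calc ∑ ω ∈ s, ‖y ω‖
      ≤ ∑ ω ∈ s, (y ω (v ω) + ε / (s.card + 1)) := by
        gcongr with ω; linarith [hyv ω]
    _ = (∑ ω ∈ s, deltaTensor ω (y ω)) f + s.card * (ε / (s.card + 1)) := by
        simp only [Finset.sum_add_distrib, Finset.sum_const, nsmul_eq_mul,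
          sum_apply, deltaTensor_apply]
        congr 1
        exact Finset.sum_congr rfl fun ω hω => by rw [hfv ω hω]
    _ ≤ ‖∑ ω ∈ s, deltaTensor ω (y ω)‖ + ε := by
        gcongr
        · exact (Real.le_norm_self _).trans <|
            (ContinuousLinearMap.le_opNorm_of_le _ ((f.norm_le zero_le_one).2 hf)).trans_eq
              (mul_one _)
        · rw [mul_div_assoc', div_le_iff₀ (by positivity)]
          nlinarith

end DeltaTensor

section Ell1

variable {Ω : Type*} [TopologicalSpace Ω] [CompactSpace Ω]
  {X : Type*} [NormedAddCommGroup X] [NormedSpace ℝ X]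

theorem summable_deltaTensor (y : lp (fun _ : Ω => StrongDual ℝ X) 1) :
    Summable fun ω => deltaTensor ω (y ω) :=
  .of_norm_bounded (lp.hasSum_norm_one y).summable fun ω => norm_deltaTensor_le ω (y ω)

noncomputable def sumDeltaTensor :
    lp (fun _ : Ω => StrongDual ℝ X) 1 →L[ℝ] StrongDual ℝ C(Ω, X) :=
  LinearMap.mkContinuous
    { toFun := fun y => ∑' ω, deltaTensor ω (y ω)
      map_add' := fun y z => by
        simp only [lp.coeFn_add, Pi.add_apply, deltaTensor_add]
        exact (summable_deltaTensor y).tsum_add (summable_deltaTensor z)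
      map_smul' := fun c y => by
        simp only [lp.coeFn_smul, Pi.smul_apply, deltaTensor_smul, RingHom.id_apply]
        exact (summable_deltaTensor y).tsum_const_smul c }
    1 fun y => by
      simpa using tsum_of_norm_bounded (lp.hasSum_norm_one y) fun ω => norm_deltaTensor_le ω (y ω)

theorem hasSum_sumDeltaTensor (y : lp (fun _ : Ω => StrongDual ℝ X) 1) :
    HasSum (fun ω => deltaTensor ω (y ω)) (sumDeltaTensor y) :=
  (summable_deltaTensor y).hasSum

theorem hasSum_sumDeltaTensor_apply (y : lp (fun _ : Ω => StrongDual ℝ X) 1) (f : C(Ω, X)) :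
    HasSum (fun ω => y ω (f ω)) (sumDeltaTensor y f) :=
  (hasSum_sumDeltaTensor y).mapL (ContinuousLinearMap.apply ℝ ℝ f)

theorem sumDeltaTensor_single [DecidableEq Ω] (ω : Ω) (x : StrongDual ℝ X) :
    sumDeltaTensor (lp.single 1 ω x) = deltaTensor ω x := by
  refine (hasSum_sumDeltaTensor _).unique (hasSum_single ω fun ω' hω' => ?_) |>.trans ?_
  · rw [lp.single_apply_ne (E := fun _ : Ω => StrongDual ℝ X) 1 ω x hω']
    ext f
    simp
  · simp

theorem norm_le_norm_sumDeltaTensor [T2Space Ω] (y : lp (fun _ : Ω => StrongDual ℝ X) 1) :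
    ‖y‖ ≤ ‖sumDeltaTensor y‖ :=
  le_of_tendsto_of_tendsto' (lp.hasSum_norm_one y) (hasSum_sumDeltaTensor y).norm
    fun s => sum_norm_le_norm_sum_deltaTensor s y

theorem antilipschitz_sumDeltaTensor [T2Space Ω] :
    AntilipschitzWith 1 (sumDeltaTensor (Ω := Ω) (X := X)) :=
  (sumDeltaTensor (Ω := Ω) (X := X)).antilipschitz_of_bound fun y => by
    rw [NNReal.coe_one, one_mul]
    exact norm_le_norm_sumDeltaTensor y

theorem isClosed_range_sumDeltaTensor [T2Space Ω] :
    IsClosed (Set.range (sumDeltaTensor (Ω := Ω) (X := X))) :=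
  antilipschitz_sumDeltaTensor.isClosed_range (sumDeltaTensor (Ω := Ω) (X := X)).uniformContinuous

theorem closure_convexHull_subset_range_sumDeltaTensor [T2Space Ω]
    {S : Set (StrongDual ℝ C(Ω, X))} (hS : ∀ T ∈ S, ∃ ω x, T = deltaTensor ω x) :
    closure (convexHull ℝ S) ⊆ Set.range (sumDeltaTensor (Ω := Ω) (X := X)) := by
  classical
  have hconvex : Convex ℝ (Set.range (sumDeltaTensor (Ω := Ω) (X := X))) := by
    simpa using convex_univ.linear_image sumDeltaTensor.toLinearMap
  refine closure_minimal (convexHull_min ?_ hconvex) isClosed_range_sumDeltaTensor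
  intro T hT
  obtain ⟨ω, x, rfl⟩ := hS T hT
  exact ⟨lp.single 1 ω x, sumDeltaTensor_single ω x⟩

end Ell1

theorem exists_nat_hasSum_iff_of_countable_support {α E : Type*} [Nonempty α] [Zero E]
    {y : α → E} (hy : (Function.support y).Countable) :
    ∃ (p : ℕ → α) (z : ℕ → E), ∀ {G : Type*} [AddCommMonoid G] [TopologicalSpace G]
      (g : α → E → G), (∀ a, g a 0 = 0) →
      ∀ b, HasSum (fun i => g (p i) (z i)) b ↔ HasSum (fun a => g a (y a)) b := by
  have := hy.to_subtype
  obtain ⟨e, he⟩ := Countable.exists_injective_nat (Function.support y)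
  refine ⟨Function.extend e Subtype.val fun _ => Classical.arbitrary α,
    Function.extend e (fun a => y a) 0, fun g hg b => ?_⟩
  rw [← he.hasSum_iff fun i hi => by
      rw [Function.extend_apply' _ (0 : ℕ → E) _ fun ⟨a, ha⟩ => hi ⟨a, ha⟩, Pi.zero_apply, hg],
    ← hasSum_subtype_iff_of_support_subset (s := Function.support y)]
  · simp only [Function.comp_def, he.extend_apply]
  · exact Function.support_subset_iff'.2 fun a ha => by
      simp only [Function.notMem_support.1 ha, hg]

theorem countable_support_of_mem_closed_convexHull_general
    {Ω : Type*} [TopologicalSpace Ω] [CompactSpace Ω] [T2Space Ω]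
    {X : Type*} [NormedAddCommGroup X] [NormedSpace ℝ X]
    (Φ : StrongDual ℝ C(Ω, X))
    (hmem : Φ ∈ closure (convexHull ℝ
      {T : StrongDual ℝ C(Ω, X) | ∃ (ω : Ω) (x : StrongDual ℝ X), ‖x‖ ≤ 1 ∧ T = deltaTensor ω x})) :
    ∃ (ω : ℕ → Ω) (x : ℕ → StrongDual ℝ X),
      Summable (fun i => ‖x i‖) ∧
      ∀ f : C(Ω, X), Φ f = ∑' i, (x i) (f (ω i)) := by
  obtain ⟨-, ω₀, -, -⟩ := convexHull_nonempty_iff.1 (closure_nonempty_iff.1 ⟨Φ, hmem⟩)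
  have : Nonempty Ω := ⟨ω₀⟩
  obtain ⟨y, rfl⟩ := closure_convexHull_subset_range_sumDeltaTensor
    (by rintro _ ⟨ω, x, -, rfl⟩; exact ⟨ω, x, rfl⟩) hmem
  obtain ⟨ω, x, hreindex⟩ :=
    exists_nat_hasSum_iff_of_countable_support (lp.memℓp y).summable_of_one.countable_support
  refine ⟨ω, x, ?_, fun f => ?_⟩
  · exact ((hreindex (fun _ x => ‖x‖) fun _ => norm_zero) _).2 (lp.hasSum_norm_one y) |>.summable
  · exact ((hreindex (fun ω x => x (f ω)) fun _ => rfl) _).2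
      (hasSum_sumDeltaTensor_apply y f) |>.tsum_eq.symm

/-- **Countable support.**  If `Φ ∈ S(C(Ω, X)*)` lies in the norm-closed convex hull of
the point functionals `{δ_ω ⊗ x* : ω ∈ Ω, x* ∈ X*₁}`, then (viewed as an `X*`-valued
regular Borel measure) `Φ` has at most countable support: it is a countable sum of point
masses, i.e. there are `ω_i ∈ Ω` and `x_i* ∈ X*` with `∑ ‖x_i*‖ < ∞` and
`Φ f = ∑ x_i*(f(ω_i))` for all `f`. -/
theorem countable_support_of_mem_closed_convexHull
    {Ω : Type*} [TopologicalSpace Ω] [CompactSpace Ω] [T2Space Ω]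
    {X : Type*} [NormedAddCommGroup X] [NormedSpace ℝ X] [CompleteSpace X]
    (Φ : StrongDual ℝ C(Ω, X)) (hΦ : ‖Φ‖ = 1)
    (hmem : Φ ∈ closure (convexHull ℝ
      {T : StrongDual ℝ C(Ω, X) | ∃ (ω : Ω) (x : StrongDual ℝ X), ‖x‖ ≤ 1 ∧ T = deltaTensor ω x})) :
    ∃ (ω : ℕ → Ω) (x : ℕ → StrongDual ℝ X),
      Summable (fun i => ‖x i‖) ∧
      ∀ f : C(Ω, X), Φ f = ∑' i, (x i) (f (ω i)) :=
  countable_support_of_mem_closed_convexHull_general Φ hmem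
end

section
/- Let Ω be a compact Hausdorff space whose set I of isolated points admits a homeomorphism φ of βI into Ω with φ(k) = k for each k ∈ I, let X be a Banach space, and let Φ = ∑_{i=1}^∞ α_i (δ_{k_i} ⊗ x_i*) ∈ C(Ω, X)*_1 with α_i ∈ (0,1], ∑ α_i = 1, k_i ∈ I distinct, and x_i* ∈ S(X*). If there is a countable set A ⊆ X_1 with norm-compact closure such that each x_i* attains its norm on A, then Φ attains its norm on the unit sphere of C(Ω, X). -/
/-!
Choose `a_i ∈ A` with `x_i* a_i = 1`. Since `I` is discrete, `k_i ↦ a_i` is a continuous map into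
the compact set `closure A`, so it extends to `βI`, hence along `φ` to the closed set `φ(βI)`, with
values in the unit ball; a Tietze extension `f` then has `‖f‖ ≤ 1` and
`Φ f = ∑ α_i x_i*(a_i) = ∑ α_i = 1`, which forces `‖f‖ = 1`.

Tietze's theorem for Banach-valued maps is obtained by iteration: a partition of unity turns an
extension that is `δ`-accurate on the closed set into an `ε`-accurate one at uniform distance
`< 2δ` from it, and with `δ = (M + 1) / 2 ^ n` these converge uniformly to an exact extension.
-/

open NormedSpace Filter Topology

open Set Metric

section Extension

variable {Ω : Type*} [TopologicalSpace Ω] {Y : Type*} [TopologicalSpace Y]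
  {X : Type*} [NormedAddCommGroup X] [NormedSpace ℝ X] {e : Y → Ω} {v : Y → X} {M : ℝ}

theorem Topology.IsClosedEmbedding.exists_refine_approx_extension [NormalSpace Ω]
    [ParacompactSpace Ω] (he : IsClosedEmbedding e) (hv : Continuous v) (hvM : ∀ b, ‖v b‖ ≤ M)
    {G : C(Ω, X)} (hGM : ∀ z, ‖G z‖ ≤ M) {δ ε : ℝ} (hδ : 0 < δ)
    (hGv : ∀ b, dist (G (e b)) (v b) < δ) (hε : 0 < ε) :
    ∃ G' : C(Ω, X), (∀ z, ‖G' z‖ ≤ M) ∧ (∀ z, dist (G' z) (G z) < 2 * δ) ∧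
      ∀ b, dist (G' (e b)) (v b) < ε := by
  let t : Ω → Set X := fun z =>
    closedBall 0 M ∩ ball (G z) (2 * δ) ∩ ⋂ b ∈ e ⁻¹' {z}, ball (v b) ε
  have ht : ∀ z, Convex ℝ (t z) := fun z =>
    ((convex_closedBall _ _).inter (convex_ball _ _)).inter
      (convex_iInter₂ fun _ _ => convex_ball _ _)
  obtain ⟨G', hG'⟩ : ∃ G' : C(Ω, X), ∀ z, G' z ∈ t z := by
    refine exists_continuous_forall_mem_convex_of_local_const ht fun z => ?_
    by_cases hz : z ∈ range e
    · obtain ⟨b, rfl⟩ := hz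
      have hG : ∀ᶠ z' in 𝓝 (e b), dist (G z') (G (e b)) < δ :=
        G.continuous.continuousAt (ball_mem_nhds _ hδ)
      have hve : ∀ᶠ z' in 𝓝 (e b), ∀ b', e b' = z' → dist (v b') (v b) < ε := by
        have : ∀ᶠ b' in 𝓝 b, dist (v b') (v b) < ε := hv.continuousAt (ball_mem_nhds _ hε)
        rwa [he.isInducing.nhds_eq_comap, eventually_comap] at this
      refine ⟨v b, ?_⟩
      filter_upwards [hG, hve] with z' hGz' hvz'
      refine ⟨⟨mem_closedBall_zero_iff.2 (hvM b), ?_⟩, mem_iInter₂.2 fun b' hb' => ?_⟩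
      · calc dist (v b) (G z') ≤ dist (v b) (G (e b)) + dist (G (e b)) (G z') :=
            dist_triangle _ _ _
          _ < δ + δ := by
            rw [dist_comm (v b), dist_comm _ (G z')]; exact add_lt_add (hGv b) hGz'
          _ = 2 * δ := by ring
      · exact mem_ball_comm.1 (hvz' b' hb')
    · have hG : ∀ᶠ z' in 𝓝 z, dist (G z') (G z) < 2 * δ :=
        G.continuous.continuousAt (ball_mem_nhds _ (by positivity))
      have hout : ∀ᶠ z' in 𝓝 z, z' ∉ range e := he.isClosed_range.isOpen_compl.mem_nhds hz
      refine ⟨G z, ?_⟩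
      filter_upwards [hG, hout] with z' hGz' hz'
      exact ⟨⟨mem_closedBall_zero_iff.2 (hGM z), mem_ball_comm.1 hGz'⟩,
        mem_iInter₂.2 fun b hb => absurd ⟨b, hb⟩ hz'⟩
  exact ⟨G', fun z => mem_closedBall_zero_iff.1 (hG' z).1.1, fun z => (hG' z).1.2,
    fun b => mem_iInter₂.1 (hG' (e b)).2 b rfl⟩

theorem Topology.IsClosedEmbedding.exists_continuousMap_norm_le_comp_eq [CompactSpace Ω]
    [T2Space Ω] [CompleteSpace X] (he : IsClosedEmbedding e) (hv : Continuous v) (hM : 0 ≤ M)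
    (hvM : ∀ b, ‖v b‖ ≤ M) : ∃ F : C(Ω, X), (∀ z, ‖F z‖ ≤ M) ∧ F ∘ e = v := by
  let δ : ℕ → ℝ := fun n => (M + 1) / 2 ^ n
  have hδ : ∀ n, 0 < δ n := fun n => by positivity
  let P : ℝ → C(Ω, X) → Prop := fun r G => (∀ z, ‖G z‖ ≤ M) ∧ ∀ b, dist (G (e b)) (v b) < r
  have step : ∀ n (G : {G // P (δ n) G}), ∃ G' : {G' // P (δ (n + 1)) G'},
      dist (G : C(Ω, X)) G' ≤ 2 * δ n := by
    rintro n ⟨G, hGM, hGv⟩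
    obtain ⟨G', hG'M, hG'G, hG'v⟩ :=
      he.exists_refine_approx_extension hv hvM hGM (hδ n) hGv (hδ (n + 1))
    exact ⟨⟨G', hG'M, hG'v⟩, (ContinuousMap.dist_le (by linarith [hδ n])).2
      fun z => (dist_comm _ _).trans_le (hG'G z).le⟩
  choose next hnext using step
  have hP0 : P (δ 0) 0 := ⟨fun _ => by simpa using hM, fun b => by
    simpa [δ] using (hvM b).trans_lt (lt_add_one M)⟩
  let G : (n : ℕ) → {G // P (δ n) G} := fun n => Nat.rec ⟨0, hP0⟩ next n
  have hdist : ∀ n, dist (G n).1 (G (n + 1)).1 ≤ 4 * (M + 1) / 2 / 2 ^ n := by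
    intro n
    have hG : G (n + 1) = next n (G n) := rfl
    rw [hG]
    exact (hnext n (G n)).trans_eq (by ring)
  have hcauchy : CauchySeq fun n => (G n).1 := cauchySeq_of_le_geometric_two hdist
  obtain ⟨F, hF⟩ := cauchySeq_tendsto_of_complete hcauchy
  refine ⟨F, fun z => ?_, funext fun b => ?_⟩
  · have hFM : ‖F‖ ≤ M := le_of_tendsto' (continuous_norm.tendsto F |>.comp hF) fun n =>
      (ContinuousMap.norm_le _ hM).2 (G n).2.1
    exact (F.norm_coe_le_norm z).trans hFM
  · have hFb : Tendsto (fun n => (G n).1 (e b)) atTop (𝓝 (F (e b))) :=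
      (continuous_eval_const (e b)).tendsto F |>.comp hF
    have hvb : Tendsto (fun n => (G n).1 (e b)) atTop (𝓝 (v b)) := by
      refine tendsto_iff_dist_tendsto_zero.2 (squeeze_zero (fun _ => dist_nonneg)
        (fun n => ((G n).2.2 b).le) ?_)
      have hhalf : Tendsto (fun n => ((1 : ℝ) / 2) ^ n) atTop (𝓝 0) :=
        tendsto_pow_atTop_nhds_zero_of_lt_one (by norm_num) (by norm_num)
      simpa [δ, div_eq_mul_inv] using hhalf.const_mul (M + 1)
    exact tendsto_nhds_unique hFb hvb

end Extension

instance discreteTopology_isOpen_singleton_subtype {Ω : Type*} [TopologicalSpace Ω] :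
    DiscreteTopology {ω : Ω // IsOpen ({ω} : Set Ω)} :=
  discreteTopology_iff_isOpen_singleton.2 fun b =>
    isOpen_induced_iff.2 ⟨{b.1}, b.2, by ext; simp [Subtype.ext_iff]⟩

theorem StrongDual.norm_eq_one_of_apply_eq_one {E : Type*} [SeminormedAddCommGroup E]
    [NormedSpace ℝ E] {Φ : StrongDual ℝ E} (hΦ : ‖Φ‖ ≤ 1) {f : E} (hf : ‖f‖ ≤ 1)
    (hΦf : Φ f = 1) : ‖f‖ = 1 :=
  hf.antisymm <| calc
    1 = ‖Φ f‖ := by rw [hΦf, norm_one]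
    _ ≤ ‖Φ‖ * ‖f‖ := Φ.le_opNorm f
    _ ≤ ‖f‖ := mul_le_of_le_one_left (norm_nonneg f) hΦ

theorem norm_attains_of_stoneCech_embedding_general
    {Ω : Type*} [TopologicalSpace Ω] [CompactSpace Ω] [T2Space Ω]
    {X : Type*} [NormedAddCommGroup X] [NormedSpace ℝ X] [CompleteSpace X]
    (φ : StoneCech {ω : Ω // IsOpen ({ω} : Set Ω)} → Ω)
    (hφ : Topology.IsEmbedding φ)
    (hφfix : ∀ k : {ω : Ω // IsOpen ({ω} : Set Ω)}, φ (stoneCechUnit k) = (k : Ω))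
    (Φ : StrongDual ℝ C(Ω, X)) (hΦball : ‖Φ‖ ≤ 1)
    (α : ℕ → ℝ) (hαsum : HasSum α 1)
    (k : ℕ → {ω : Ω // IsOpen ({ω} : Set Ω)}) (hk : Function.Injective k)
    (x : ℕ → StrongDual ℝ X)
    (hrep : ∀ f : C(Ω, X), Φ f = ∑' i, α i * (deltaTensor (k i : Ω) (x i)) f)
    (A : ℕ → X) (hA : ∀ j, ‖A j‖ ≤ 1)
    (hAcpt : IsCompact (closure (Set.range A)))
    (hatt : ∀ i, ∃ j, (x i) (A j) = 1) :
    ∃ f : C(Ω, X), ‖f‖ = 1 ∧ Φ f = 1 := by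
  choose j hj using hatt
  have : CompactSpace (closure (range A)) := isCompact_iff_compactSpace.1 hAcpt
  have hA_mem : ∀ n, A n ∈ closure (range A) := fun n => subset_closure (mem_range_self n)
  have hA_ball : closure (range A) ⊆ closedBall 0 1 :=
    closure_minimal (range_subset_iff.2 fun n => mem_closedBall_zero_iff.2 (hA n))
      isClosed_closedBall
  let g : {ω : Ω // IsOpen ({ω} : Set Ω)} → closure (range A) :=
    Function.extend k (fun i => ⟨A (j i), hA_mem _⟩) fun _ => ⟨A 0, hA_mem 0⟩
  have hg : Continuous g := continuous_of_discreteTopology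
  obtain ⟨f, hf_le, hfφ⟩ :=
    (hφ.continuous.isClosedEmbedding hφ.injective).exists_continuousMap_norm_le_comp_eq
      (continuous_subtype_val.comp (continuous_stoneCechExtend hg)) zero_le_one
      fun b => mem_closedBall_zero_iff.1 (hA_ball (stoneCechExtend hg b).2)
  have hfk : ∀ i, f (k i) = A (j i) := fun i => by
    rw [← hφfix, ← Function.comp_apply (f := f), hfφ, Function.comp_apply,
      stoneCechExtend_stoneCechUnit]
    simp [g, hk.extend_apply]
  have hΦf : Φ f = 1 := by
    simp [hrep, deltaTensor, hfk, hj, hαsum.tsum_eq]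
  exact ⟨f, StrongDual.norm_eq_one_of_apply_eq_one hΦball
    ((ContinuousMap.norm_le _ zero_le_one).2 hf_le) hΦf, hΦf⟩

/-- **Norm attainment when `βI` embeds into `Ω`.**  Let `Ω` be a compact Hausdorff space
whose set `I` of isolated points admits a homeomorphism `φ` of `βI` into `Ω` fixing each
`k ∈ I`, and let `Φ = ∑ α_i (δ_{k_i} ⊗ x_i*)` be in the dual unit ball of `C(Ω, X)` with
`α_i ∈ (0, 1]`, `∑ α_i = 1`, `k_i ∈ I` distinct and `x_i* ∈ S(X*)`.  If there is a
countable set `A ⊆ X₁` with norm-compact closure on which every `x_i*` attains its norm,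
then `Φ` attains its norm on the unit sphere of `C(Ω, X)`. -/
theorem norm_attains_of_stoneCech_embedding
    {Ω : Type*} [TopologicalSpace Ω] [CompactSpace Ω] [T2Space Ω]
    {X : Type*} [NormedAddCommGroup X] [NormedSpace ℝ X] [CompleteSpace X]
    (φ : StoneCech {ω : Ω // IsOpen ({ω} : Set Ω)} → Ω)
    (hφ : Topology.IsEmbedding φ)
    (hφfix : ∀ k : {ω : Ω // IsOpen ({ω} : Set Ω)}, φ (stoneCechUnit k) = (k : Ω))
    (Φ : StrongDual ℝ C(Ω, X)) (hΦball : ‖Φ‖ ≤ 1)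
    (α : ℕ → ℝ) (hα : ∀ i, α i ∈ Set.Ioc (0 : ℝ) 1) (hαsum : HasSum α 1)
    (k : ℕ → {ω : Ω // IsOpen ({ω} : Set Ω)}) (hk : Function.Injective k)
    (x : ℕ → StrongDual ℝ X) (hx : ∀ i, ‖x i‖ = 1)
    (hrep : ∀ f : C(Ω, X), Φ f = ∑' i, α i * (deltaTensor (k i : Ω) (x i)) f)
    (A : ℕ → X) (hA : ∀ j, ‖A j‖ ≤ 1)
    (hAcpt : IsCompact (closure (Set.range A)))
    (hatt : ∀ i, ∃ j, (x i) (A j) = 1) :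
    ∃ f : C(Ω, X), ‖f‖ = 1 ∧ Φ f = 1 :=
  norm_attains_of_stoneCech_embedding_general φ hφ hφfix Φ hΦball α hαsum k hk x hrep A hA hAcpt
    hatt
end
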